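/- arXiv:math/0608414 — 2 statements merged into one kernel-verified Lean document; each statement's English description precedes it below -/
import Mathlib

section
/- If f is a fixed locally integrable function on [0, D] (D finite) with ‖f‖_b < ∞, then for every ε > 0 there exist b > 0 and a constant K such that for all k ≥ 1, the uniform norm of f * g^{*k} on [0, D] is bounded by K ε^k, whenever ‖g‖_b < ε; more precisely, |(f * g^{*k})(p)| ≤ D^{-1} e^{bp} ‖f‖_u ‖g‖_b^k for all p ∈ [0, D], where ‖f‖_u := D · sup_{p∈[0,D]} |f(p)| e^{-bp}. -/
open MeasureTheory

/-- Convolution on `[0, t]`. -/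
noncomputable def conv (f g : ℝ → ℂ) (t : ℝ) : ℂ :=
  ∫ s in (0:ℝ)..t, f s * g (t - s)

/-- `convIter g k = g^{*(k+1)}`, the `(k+1)`-fold convolution power of `g`. -/
noncomputable def convIter (g : ℝ → ℂ) : ℕ → ℝ → ℂ
  | 0 => g
  | n + 1 => conv g (convIter g n)

/-!
Multiplication by `e^{-bu}` commutes with the truncated convolution, because
`e^{-bt} = e^{-bs} e^{-b(t-s)}`; this reduces the estimate to `b = 0`. There, extending by zero
outside `[0, p]` dominates the truncated convolution by the convolution on the whole line, so
Tonelli gives Young's inequality `‖A * B‖_{L¹[0,p]} ≤ ‖A‖_{L¹[0,p]} ‖B‖_{L¹[0,p]}` as well as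
`|(A * B)(p)| ≤ sup_{[0,p]} |A| · ‖B‖_{L¹[0,p]}`; iterating Young's inequality bounds the
convolution powers. Since `g` is only integrable on `[0, D]`, it is first replaced by a strongly
measurable function equal to it a.e. there, which changes no convolution on `[0, D]`.
-/

open Set
open scoped ENNReal

section LConvolution

variable {G : Type*} [MeasurableSpace G] [AddGroup G] [MeasurableAdd₂ G] [MeasurableNeg G]
  {μ : Measure G} [μ.IsAddLeftInvariant] [SFinite μ]

theorem lintegral_lconvolution {f g : G → ℝ≥0∞} (hf : AEMeasurable f μ) (hg : AEMeasurable g μ) :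
    ∫⁻ x, (f ⋆ₗ[μ] g) x ∂μ = (∫⁻ x, f x ∂μ) * ∫⁻ x, g x ∂μ := by
  simp only [lconvolution_def]
  rw [lintegral_lintegral_swap (by fun_prop), ← lintegral_mul_const'' _ hf]
  refine lintegral_congr fun y => ?_
  rw [lintegral_add_left_eq_self (fun x => f y * g x) (-y), lintegral_const_mul'' _ hg]

end LConvolution

theorem enorm_conv_le_lconvolution {A B : ℝ → ℂ} {p t : ℝ} (ht : t ∈ Icc 0 p) :
    ‖conv A B t‖ₑ ≤
      ((Icc 0 p).indicator (fun s => ‖A s‖ₑ) ⋆ₗ (Icc 0 p).indicator (fun s => ‖B s‖ₑ)) t := by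
  rw [conv, intervalIntegral.integral_of_le ht.1, lconvolution_def]
  refine (enorm_integral_le_lintegral_enorm _).trans ?_
  rw [← lintegral_indicator measurableSet_Ioc]
  refine lintegral_mono fun s => ?_
  by_cases hs : s ∈ Ioc 0 t
  · have hs' : s ∈ Icc 0 p := ⟨hs.1.le, hs.2.trans ht.2⟩
    have hts : -s + t ∈ Icc 0 p := ⟨by linarith [hs.2], by linarith [hs.1, ht.2]⟩
    rw [indicator_of_mem hs, enorm_mul, indicator_of_mem hs', indicator_of_mem hts,
      neg_add_eq_sub]
  · rw [indicator_of_notMem hs]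
    exact zero_le

theorem lintegral_enorm_conv_le {A B : ℝ → ℂ} (hA : AEMeasurable A) (hB : AEMeasurable B)
    (p : ℝ) :
    ∫⁻ t in Icc 0 p, ‖conv A B t‖ₑ ≤ (∫⁻ t in Icc 0 p, ‖A t‖ₑ) * ∫⁻ t in Icc 0 p, ‖B t‖ₑ := by
  calc ∫⁻ t in Icc 0 p, ‖conv A B t‖ₑ
      ≤ ∫⁻ t in Icc 0 p, ((Icc 0 p).indicator (fun s => ‖A s‖ₑ) ⋆ₗ
          (Icc 0 p).indicator (fun s => ‖B s‖ₑ)) t :=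
        setLIntegral_mono' measurableSet_Icc fun t ht => enorm_conv_le_lconvolution ht
    _ ≤ ∫⁻ t, ((Icc 0 p).indicator (fun s => ‖A s‖ₑ) ⋆ₗ
          (Icc 0 p).indicator (fun s => ‖B s‖ₑ)) t := setLIntegral_le_lintegral _ _
    _ = _ := by
        rw [lintegral_lconvolution (hA.enorm.indicator measurableSet_Icc)
          (hB.enorm.indicator measurableSet_Icc), lintegral_indicator measurableSet_Icc,
          lintegral_indicator measurableSet_Icc]

theorem enorm_conv_le_mul_lintegral {A B : ℝ → ℂ} {p : ℝ} {c : ℝ≥0∞} (hp : 0 ≤ p)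
    (hA : ∀ s ∈ Icc 0 p, ‖A s‖ₑ ≤ c) (hB : AEMeasurable B) :
    ‖conv A B p‖ₑ ≤ c * ∫⁻ t in Icc 0 p, ‖B t‖ₑ := by
  calc ‖conv A B p‖ₑ
      ≤ ((Icc 0 p).indicator (fun s => ‖B s‖ₑ) ⋆ₗ (Icc 0 p).indicator (fun s => ‖A s‖ₑ)) p := by
        rw [lconvolution_comm]; exact enorm_conv_le_lconvolution ⟨hp, le_rfl⟩
    _ ≤ ∫⁻ y, (Icc 0 p).indicator (fun s => ‖B s‖ₑ) y * c :=
        lintegral_mono fun y => by gcongr; exact Set.indicator_le hA _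
    _ = _ := by
        rw [lintegral_mul_const'' _ (hB.enorm.indicator measurableSet_Icc),
          lintegral_indicator measurableSet_Icc, mul_comm]

theorem MeasureTheory.StronglyMeasurable.conv {F H : ℝ → ℂ} (hF : StronglyMeasurable F)
    (hH : StronglyMeasurable H) : StronglyMeasurable (conv F H) := by
  set K : ℝ × ℝ → ℂ := fun q => F q.2 * H (q.1 - q.2)
  have hK : StronglyMeasurable K :=
    (hF.comp_measurable measurable_snd).mul (hH.comp_measurable (by fun_prop))
  have hpos : MeasurableSet {q : ℝ × ℝ | q.2 ∈ Ioc 0 q.1} := by measurability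
  have hneg : MeasurableSet {q : ℝ × ℝ | q.2 ∈ Ioc q.1 0} := by measurability
  have hconv : _root_.conv F H = fun t =>
      (∫ s, {q : ℝ × ℝ | q.2 ∈ Ioc 0 q.1}.indicator K (t, s)) -
        ∫ s, {q : ℝ × ℝ | q.2 ∈ Ioc q.1 0}.indicator K (t, s) := by
    funext t
    rw [_root_.conv, intervalIntegral, ← integral_indicator measurableSet_Ioc,
      ← integral_indicator measurableSet_Ioc]
    rfl
  rw [hconv]
  exact (hK.indicator hpos).integral_prod_right'.sub (hK.indicator hneg).integral_prod_right'

theorem MeasureTheory.StronglyMeasurable.convIter {g : ℝ → ℂ} (hg : StronglyMeasurable g) (n : ℕ) :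
    StronglyMeasurable (convIter g n) := by
  induction n with
  | zero => exact hg
  | succ n ih => exact hg.conv ih

theorem lintegral_enorm_convIter_le {g : ℝ → ℂ} (hg : StronglyMeasurable g) (p : ℝ) (n : ℕ) :
    ∫⁻ t in Icc 0 p, ‖convIter g n t‖ₑ ≤ (∫⁻ t in Icc 0 p, ‖g t‖ₑ) ^ (n + 1) := by
  induction n with
  | zero => rw [zero_add, pow_one]; rfl
  | succ n ih =>
    rw [pow_succ']
    exact (lintegral_enorm_conv_le hg.aemeasurable (hg.convIter n).aemeasurable p).trans
      (by gcongr)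

theorem conv_congr_ae {D t : ℝ} {A A' B B' : ℝ → ℂ} (hA : A =ᵐ[volume.restrict (Icc 0 D)] A')
    (hB : B =ᵐ[volume.restrict (Icc 0 D)] B') (ht : t ∈ Icc 0 D) :
    conv A B t = conv A' B' t := by
  have hB' : ∀ᵐ s, t - s ∈ Icc 0 D → B (t - s) = B' (t - s) :=
    (Measure.measurePreserving_sub_left volume t).quasiMeasurePreserving.tendsto_ae.eventually
      ((ae_restrict_iff' measurableSet_Icc).1 hB)
  refine intervalIntegral.integral_congr_ae ?_
  filter_upwards [(ae_restrict_iff' measurableSet_Icc).1 hA, hB'] with s hAs hBs hs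
  rw [uIoc_of_le ht.1] at hs
  rw [hAs ⟨hs.1.le, hs.2.trans ht.2⟩, hBs ⟨by linarith [hs.2], by linarith [hs.1, ht.2]⟩]

theorem convIter_ae_eq {D : ℝ} {g G : ℝ → ℂ} (hg : g =ᵐ[volume.restrict (Icc 0 D)] G) (n : ℕ) :
    convIter g n =ᵐ[volume.restrict (Icc 0 D)] convIter G n := by
  induction n with
  | zero => exact hg
  | succ n ih =>
    exact ae_restrict_of_forall_mem measurableSet_Icc fun t ht => conv_congr_ae hg ih ht

noncomputable def expWeight (b : ℝ) (h : ℝ → ℂ) (u : ℝ) : ℂ := Real.exp (-(b * u)) • h u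

theorem norm_expWeight (b : ℝ) (h : ℝ → ℂ) (u : ℝ) :
    ‖expWeight b h u‖ = Real.exp (-(b * u)) * ‖h u‖ := by
  rw [expWeight, norm_smul, Real.norm_of_nonneg (Real.exp_nonneg _)]

theorem MeasureTheory.StronglyMeasurable.expWeight {h : ℝ → ℂ} (hh : StronglyMeasurable h) (b : ℝ) :
    StronglyMeasurable (expWeight b h) :=
  (Real.continuous_exp.comp (by fun_prop)).stronglyMeasurable.smul hh

theorem conv_expWeight (b : ℝ) (A B : ℝ → ℂ) (t : ℝ) :
    conv (expWeight b A) (expWeight b B) t = expWeight b (conv A B) t := by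
  simp only [conv, expWeight, ← intervalIntegral.integral_smul]
  refine intervalIntegral.integral_congr fun s _ => ?_
  rw [smul_mul_smul_comm, ← Real.exp_add]
  ring_nf

theorem convIter_expWeight (b : ℝ) (g : ℝ → ℂ) (n : ℕ) :
    convIter (expWeight b g) n = expWeight b (convIter g n) := by
  induction n with
  | zero => rfl
  | succ n ih => funext t; rw [convIter, convIter, ih, conv_expWeight]

theorem norm_expWeight_le_sSup {f : ℝ → ℂ} {s : Set ℝ} (hs : IsCompact s) (hf : ContinuousOn f s)
    (b : ℝ) {q : ℝ} (hq : q ∈ s) :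
    ‖expWeight b f q‖ ≤ sSup ((fun q => ‖f q‖ * Real.exp (-(b * q))) '' s) := by
  have hcont : ContinuousOn (fun q => ‖f q‖ * Real.exp (-(b * q))) s :=
    hf.norm.mul (by fun_prop : Continuous fun q : ℝ => Real.exp (-(b * q))).continuousOn
  rw [norm_expWeight, mul_comm]
  exact le_csSup (hs.image_of_continuousOn hcont).bddAbove ⟨q, hq, rfl⟩

theorem lintegral_enorm_expWeight {g : ℝ → ℂ} {s : Set ℝ} (hs : IsCompact s)
    (hg : IntegrableOn g s) (b : ℝ) :
    ∫⁻ t in s, ‖expWeight b g t‖ₑ = ENNReal.ofReal (∫ t in s, Real.exp (-(b * t)) * ‖g t‖) := by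
  rw [ofReal_integral_eq_lintegral_ofReal (IntegrableOn.continuousOn_mul
    (by fun_prop : Continuous fun t : ℝ => Real.exp (-(b * t))).continuousOn hg.norm hs)
    (ae_of_all _ fun t => by positivity)]
  simp only [← ofReal_norm, norm_expWeight]

theorem enorm_conv_convIter_le {A G : ℝ → ℂ} {c : ℝ≥0∞} {p D : ℝ} (hG : StronglyMeasurable G)
    (hA : ∀ s ∈ Icc 0 p, ‖A s‖ₑ ≤ c) (hp : p ∈ Icc 0 D) (k : ℕ) :
    ‖conv A (convIter G k) p‖ₑ ≤ c * (∫⁻ t in Icc 0 D, ‖G t‖ₑ) ^ (k + 1) :=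
  calc ‖conv A (convIter G k) p‖ₑ
      ≤ c * ∫⁻ t in Icc 0 p, ‖convIter G k t‖ₑ :=
        enorm_conv_le_mul_lintegral hp.1 hA (hG.convIter k).aemeasurable
    _ ≤ c * (∫⁻ t in Icc 0 p, ‖G t‖ₑ) ^ (k + 1) := by
        gcongr; exact lintegral_enorm_convIter_le hG p k
    _ ≤ c * (∫⁻ t in Icc 0 D, ‖G t‖ₑ) ^ (k + 1) := by
        gcongr _ * ?_ ^ _; exact lintegral_mono_set (Icc_subset_Icc_right hp.2)

theorem conv_power_uniform_bound_general (D b : ℝ) (hD : 0 < D)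
    (f g : ℝ → ℂ) (hf : ContinuousOn f (Set.Icc 0 D))
    (hg : IntegrableOn g (Set.Icc 0 D)) :
    ∀ k : ℕ, ∀ p ∈ Set.Icc (0:ℝ) D,
      ‖conv f (convIter g k) p‖ ≤
        D⁻¹ * Real.exp (b * p)
          * (D * sSup ((fun q => ‖f q‖ * Real.exp (-(b*q))) '' Set.Icc 0 D))
          * (∫ t in Set.Icc (0:ℝ) D, Real.exp (-(b*t)) * ‖g t‖) ^ (k + 1) := by
  intro k p hp
  set M := sSup ((fun q => ‖f q‖ * Real.exp (-(b*q))) '' Set.Icc 0 D)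
  set I := ∫ t in Set.Icc (0:ℝ) D, Real.exp (-(b*t)) * ‖g t‖
  obtain ⟨G, hGm, hgG⟩ := hg.aestronglyMeasurable
  have hI : ∫⁻ t in Icc 0 D, ‖expWeight b G t‖ₑ = ENNReal.ofReal I := by
    rw [← lintegral_enorm_expWeight isCompact_Icc hg]
    exact lintegral_congr_ae (hgG.mono fun t ht => by simp only [expWeight, ht])
  have hweighted : ‖conv (expWeight b f) (convIter (expWeight b G) k) p‖ₑ ≤
      ENNReal.ofReal M * ENNReal.ofReal I ^ (k + 1) := by
    rw [← hI]
    refine enorm_conv_convIter_le (hGm.expWeight b) (fun s hs => ?_) hp k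
    rw [← ofReal_norm]
    exact ENNReal.ofReal_le_ofReal
      (norm_expWeight_le_sSup isCompact_Icc hf b ⟨hs.1, hs.2.trans hp.2⟩)
  have hM0 : 0 ≤ M := Real.sSup_nonneg (by rintro _ ⟨q, -, rfl⟩; positivity)
  have hI0 : 0 ≤ I := integral_nonneg fun t => by positivity
  rw [← ENNReal.ofReal_pow hI0, ← ENNReal.ofReal_mul hM0, ← ofReal_norm,
    ENNReal.ofReal_le_ofReal_iff (by positivity)] at hweighted
  calc ‖conv f (convIter g k) p‖
      = Real.exp (b * p) * ‖conv (expWeight b f) (convIter (expWeight b G) k) p‖ := by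
        rw [conv_congr_ae Filter.EventuallyEq.rfl (convIter_ae_eq hgG k) hp, convIter_expWeight,
          conv_expWeight, norm_expWeight, ← mul_assoc, ← Real.exp_add, add_neg_cancel,
          Real.exp_zero, one_mul]
    _ ≤ Real.exp (b * p) * (M * I ^ (k + 1)) := by gcongr
    _ = _ := by field_simp

/-- for continuous `f` and integrable `g` on `[0,D]`, for every `k ≥ 1`
(`convIter g k` below is `g^{*(k+1)}`, so `k+1` ranges over all integers `≥ 1`),
`|(f * g^{*k})(p)| ≤ D⁻¹ e^{bp} ‖f‖_u ‖g‖_b^k` on `[0,D]`, where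
`‖f‖_u = D·sup_{[0,D]} |f| e^{-bp}` and `‖g‖_b = ∫₀^D e^{-bt}|g(t)| dt`.  In
particular, if `‖g‖_b < ε` then `‖f * g^{*k}‖_∞ ≤ K ε^k` with `K` independent of `k`. -/
theorem conv_power_uniform_bound (D b : ℝ) (hD : 0 < D) (hb : 0 < b)
    (f g : ℝ → ℂ) (hf : ContinuousOn f (Set.Icc 0 D))
    (hg : IntegrableOn g (Set.Icc 0 D)) :
    ∀ k : ℕ, ∀ p ∈ Set.Icc (0:ℝ) D,
      ‖conv f (convIter g k) p‖ ≤
        D⁻¹ * Real.exp (b * p)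
          * (D * sSup ((fun q => ‖f q‖ * Real.exp (-(b*q))) '' Set.Icc 0 D))
          * (∫ t in Set.Icc (0:ℝ) D, Real.exp (-(b*t)) * ‖g t‖) ^ (k + 1) :=
  conv_power_uniform_bound_general D b hD f g hf hg
end

section
/- If A, B are analytic on D_ε and r, q > -1, then ∫₀^z s^r A(s) (z-s)^q B(z-s) ds = z^{r+q+1} ∫₀^1 t^r (1-t)^q A(zt) B(z(1-t)) dt; consequently, if f(z) = z^r A(z) and g(z) = z^q B(z) with A, B analytic at 0, then (f*g)(z) = z^{r+q+1} C(z) with C analytic at 0. -/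
/-!
For `t ∈ [0, 1]` the nonnegative real factor pulls out of the principal power,
`(z t)^r = z^r t^r`, so the segment integral is `z^r z^q · z` times the weighted integral over
`[0, 1]`. That integral is holomorphic in `z` by differentiation under the integral sign: the
weight `t^r (1-t)^q` is the integrable Beta kernel since `r, q > -1`, and the `z`-derivative of
`A(zt) B(z(1-t))` is jointly continuous, hence bounded on compact neighbourhoods.
-/

open MeasureTheory Set Metric
open scoped Interval

theorem Complex.mul_ofReal_cpow (w : ℂ) {s : ℝ} (hs : 0 ≤ s) (y : ℂ) :
    (w * s) ^ y = w ^ y * (s : ℂ) ^ y := by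
  rcases eq_or_ne y 0 with rfl | hy
  · simp
  rcases eq_or_ne w 0 with rfl | hw
  · simp [Complex.zero_cpow hy]
  rcases hs.eq_or_lt with rfl | hs
  · simp [Complex.zero_cpow hy]
  have hs' : (s : ℂ) ≠ 0 := Complex.ofReal_ne_zero.mpr hs.ne'
  rw [Complex.cpow_def_of_ne_zero (mul_ne_zero hw hs'), Complex.cpow_def_of_ne_zero hw,
    Complex.cpow_def_of_ne_zero hs', Complex.log_mul_ofReal s hs w hw,
    Complex.ofReal_log hs.le, add_mul, Complex.exp_add, mul_comm]

theorem intervalIntegrable_cpow_mul_one_sub_cpow {r q : ℝ} (hr : -1 < r) (hq : -1 < q) :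
    IntervalIntegrable (fun t : ℝ => (t : ℂ) ^ (r : ℂ) * (1 - (t : ℂ)) ^ (q : ℂ)) volume 0 1 := by
  simpa using Complex.betaIntegral_convergent (u := r + 1) (v := q + 1)
    (by simp; linarith) (by simp; linarith)

section ParametricIntegral

variable {𝕜 : Type*} [RCLike 𝕜] {E : Type*} [NormedAddCommGroup E] [NormedSpace 𝕜 E]
  {μ : Measure ℝ} {a b : ℝ} {U : Set 𝕜} {w : ℝ → 𝕜} {F F' : 𝕜 → ℝ → E}

theorem IntervalIntegrable.smul_continuousOn_uncurry (hw : IntervalIntegrable w μ a b)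
    (hF : ContinuousOn (Function.uncurry F) (U ×ˢ [[a, b]])) {z : 𝕜} (hz : z ∈ U) :
    IntervalIntegrable (fun t => w t • F z t) μ a b :=
  hw.smul_continuousOn <| hF.comp (continuousOn_const.prodMk continuousOn_id) fun _ ht => ⟨hz, ht⟩

theorem differentiableOn_intervalIntegral_smul [NormedSpace ℝ E] (hU : IsOpen U)
    (hw : IntervalIntegrable w μ a b)
    (hF : ContinuousOn (Function.uncurry F) (U ×ˢ [[a, b]]))
    (hF' : ContinuousOn (Function.uncurry F') (U ×ˢ [[a, b]]))
    (hderiv : ∀ z ∈ U, ∀ t ∈ [[a, b]], HasDerivAt (F · t) (F' z t) z) :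
    DifferentiableOn 𝕜 (fun z => ∫ t in a..b, w t • F z t ∂μ) U := by
  intro z₀ hz₀
  obtain ⟨δ, hδ, hδU⟩ := nhds_basis_closedBall.mem_iff.1 (hU.mem_nhds hz₀)
  obtain ⟨C, hC⟩ := ((isCompact_closedBall z₀ δ).prod isCompact_uIcc).exists_bound_of_continuousOn
    (hF'.mono (prod_mono hδU subset_rfl))
  refine (intervalIntegral.hasDerivAt_integral_of_dominated_loc_of_deriv_le
    (F' := fun x t => w t • F' x t) (bound := fun t => ‖w t‖ * C) (ball_mem_nhds z₀ hδ)
    ?_ (hw.smul_continuousOn_uncurry hF hz₀)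
    (hw.smul_continuousOn_uncurry hF' hz₀).aestronglyMeasurable_restrict_uIoc ?_
    (hw.norm.mul_const C) ?_).2.differentiableAt.differentiableWithinAt
  · filter_upwards [hU.mem_nhds hz₀] with x hx
    exact (hw.smul_continuousOn_uncurry hF hx).aestronglyMeasurable_restrict_uIoc
  · refine ae_of_all _ fun t ht x hx => ?_
    rw [norm_smul]
    exact mul_le_mul_of_nonneg_left (hC (x, t) ⟨ball_subset_closedBall hx, uIoc_subset_uIcc ht⟩)
      (norm_nonneg _)
  · exact ae_of_all _ fun t ht x hx =>
      (hderiv x (hδU (ball_subset_closedBall hx)) t (uIoc_subset_uIcc ht)).const_smul (w t)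

end ParametricIntegral

section ScaledProduct

variable {ε : ℝ} {A B : ℂ → ℂ}

theorem mul_mem_ball_zero_of_norm_le_one {α : Type*} [SeminormedRing α] {z w : α}
    (hz : z ∈ ball (0 : α) ε) (hw : ‖w‖ ≤ 1) : z * w ∈ ball (0 : α) ε := by
  rw [mem_ball_zero_iff] at hz ⊢
  exact (norm_mul_le _ _).trans_lt (by nlinarith [norm_nonneg z])

theorem norm_ofReal_le_one {t : ℝ} (ht : t ∈ Icc (0 : ℝ) 1) : ‖(t : ℂ)‖ ≤ 1 := by
  rw [Complex.norm_real, Real.norm_of_nonneg ht.1]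
  exact ht.2

theorem norm_one_sub_ofReal_le_one {t : ℝ} (ht : t ∈ Icc (0 : ℝ) 1) : ‖1 - (t : ℂ)‖ ≤ 1 := by
  rw [← Complex.ofReal_one, ← Complex.ofReal_sub]
  exact norm_ofReal_le_one ⟨by linarith [ht.2], by linarith [ht.1]⟩

theorem continuousOn_comp_mul_mul_comp_mul_one_sub (hA : ContinuousOn A (ball 0 ε))
    (hB : ContinuousOn B (ball 0 ε)) :
    ContinuousOn (fun p : ℂ × ℝ => A (p.1 * p.2) * B (p.1 * (1 - p.2))) (ball 0 ε ×ˢ Icc 0 1) := by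
  refine (hA.comp (by fun_prop) fun p hp => ?_).mul (hB.comp (by fun_prop) fun p hp => ?_)
  · exact mul_mem_ball_zero_of_norm_le_one hp.1 (norm_ofReal_le_one hp.2)
  · exact mul_mem_ball_zero_of_norm_le_one hp.1 (norm_one_sub_ofReal_le_one hp.2)

theorem hasDerivAt_comp_mul_mul_comp_mul_one_sub {z t : ℂ} (hA : DifferentiableAt ℂ A (z * t))
    (hB : DifferentiableAt ℂ B (z * (1 - t))) :
    HasDerivAt (fun x => A (x * t) * B (x * (1 - t)))
      (t * (deriv A (z * t) * B (z * (1 - t))) + (1 - t) * (A (z * t) * deriv B (z * (1 - t))))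
      z := by
  have hA' : HasDerivAt (fun x => A (x * t)) (deriv A (z * t) * t) z :=
    hA.hasDerivAt.comp z (hasDerivAt_mul_const t)
  have hB' : HasDerivAt (fun x => B (x * (1 - t))) (deriv B (z * (1 - t)) * (1 - t)) z :=
    hB.hasDerivAt.comp z (hasDerivAt_mul_const (1 - t))
  exact (hA'.mul hB').congr_deriv (by ring)

theorem analyticOnNhd_intervalIntegral_mul_comp_mul_mul_comp_mul_one_sub {w : ℝ → ℂ}
    (hw : IntervalIntegrable w volume 0 1) (hA : AnalyticOnNhd ℂ A (ball 0 ε))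
    (hB : AnalyticOnNhd ℂ B (ball 0 ε)) :
    AnalyticOnNhd ℂ (fun z => ∫ t in (0 : ℝ)..1, w t * (A (z * t) * B (z * (1 - t))))
      (ball 0 ε) := by
  have hI : [[(0 : ℝ), 1]] = Icc 0 1 := uIcc_of_le zero_le_one
  refine (differentiableOn_intervalIntegral_smul (F := fun z (t : ℝ) => A (z * t) * B (z * (1 - t)))
    (F' := fun z (t : ℝ) => t * (deriv A (z * t) * B (z * (1 - t)))
      + (1 - t) * (A (z * t) * deriv B (z * (1 - t))))
    isOpen_ball hw ?_ ?_ ?_).analyticOnNhd isOpen_ball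
  · rw [hI]
    exact continuousOn_comp_mul_mul_comp_mul_one_sub hA.continuousOn hB.continuousOn
  · rw [hI]
    have hcont := continuousOn_comp_mul_mul_comp_mul_one_sub hA.deriv.continuousOn hB.continuousOn
    have hcont' := continuousOn_comp_mul_mul_comp_mul_one_sub hA.continuousOn hB.deriv.continuousOn
    exact ((by fun_prop : Continuous fun p : ℂ × ℝ => (p.2 : ℂ)).continuousOn.mul hcont).add
      ((by fun_prop : Continuous fun p : ℂ × ℝ => 1 - (p.2 : ℂ)).continuousOn.mul hcont')
  · rw [hI]
    intro z hz t ht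
    exact hasDerivAt_comp_mul_mul_comp_mul_one_sub
      (hA _ (mul_mem_ball_zero_of_norm_le_one hz (norm_ofReal_le_one ht))).differentiableAt
      (hB _ (mul_mem_ball_zero_of_norm_le_one hz (norm_one_sub_ofReal_le_one ht))).differentiableAt

end ScaledProduct

theorem conv_rpow_analytic_general (ε : ℝ) (A B : ℂ → ℂ)
    (hA : AnalyticOnNhd ℂ A (Metric.ball 0 ε))
    (hB : AnalyticOnNhd ℂ B (Metric.ball 0 ε)) (r q : ℝ) (hr : -1 < r) (hq : -1 < q) :
    AnalyticOnNhd ℂ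
        (fun z => ∫ t in (0:ℝ)..1,
          (t:ℂ) ^ (r:ℂ) * ((1:ℂ) - (t:ℂ)) ^ (q:ℂ) * A (z * (t:ℂ)) * B (z * ((1:ℂ) - (t:ℂ))))
        (Metric.ball 0 ε) ∧
      ∀ z ∈ Metric.ball (0:ℂ) ε, z ∉ {w : ℂ | w.re ≤ 0 ∧ w.im = 0} →
        z * ∫ t in (0:ℝ)..1,
            (z * (t:ℂ)) ^ (r:ℂ) * A (z * (t:ℂ))
              * (z * ((1:ℂ) - (t:ℂ))) ^ (q:ℂ) * B (z * ((1:ℂ) - (t:ℂ)))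
          = z ^ ((r:ℂ) + (q:ℂ) + 1) * ∫ t in (0:ℝ)..1,
              (t:ℂ) ^ (r:ℂ) * ((1:ℂ) - (t:ℂ)) ^ (q:ℂ)
                * A (z * (t:ℂ)) * B (z * ((1:ℂ) - (t:ℂ))) := by
  refine ⟨?_, fun z _ hz => ?_⟩
  · simpa only [mul_assoc] using analyticOnNhd_intervalIntegral_mul_comp_mul_mul_comp_mul_one_sub
      (intervalIntegrable_cpow_mul_one_sub_cpow hr hq) hA hB
  have hz0 : z ≠ 0 := by
    rintro rfl
    exact hz ⟨le_rfl, rfl⟩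
  have hsplit : EqOn
      (fun t : ℝ => (z * t) ^ (r : ℂ) * A (z * t) * (z * (1 - t)) ^ (q : ℂ) * B (z * (1 - t)))
      (fun t : ℝ => z ^ (r : ℂ) * z ^ (q : ℂ) *
        ((t : ℂ) ^ (r : ℂ) * (1 - (t : ℂ)) ^ (q : ℂ) * A (z * t) * B (z * (1 - t))))
      [[0, 1]] := by
    intro t ht
    rw [uIcc_of_le zero_le_one] at ht
    have h1t : (1 : ℂ) - t = ((1 - t : ℝ) : ℂ) := by push_cast; ring
    simp only [Complex.mul_ofReal_cpow z ht.1, h1t, Complex.mul_ofReal_cpow z (sub_nonneg.2 ht.2)]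
    ring
  rw [intervalIntegral.integral_congr hsplit, intervalIntegral.integral_const_mul,
    Complex.cpow_add _ _ hz0, Complex.cpow_add _ _ hz0, Complex.cpow_one]
  ring

/-- for `A, B` analytic on `D_ε` and `r, q > -1`,
`∫₀^z s^r A(s) (z-s)^q B(z-s) ds = z^{r+q+1} ∫₀^1 t^r (1-t)^q A(zt) B(z(1-t)) dt`
(the left side parametrized along the segment from `0` to `z`); consequently the
convolution of `z^r·(analytic)` and `z^q·(analytic)` is `z^{r+q+1}·(analytic)`:
the factor `z ↦ ∫₀^1 t^r (1-t)^q A(zt) B(z(1-t)) dt` is analytic on `D_ε`. -/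
theorem conv_rpow_analytic (ε : ℝ) (hε : 0 < ε) (A B : ℂ → ℂ)
    (hA : AnalyticOnNhd ℂ A (Metric.ball 0 ε))
    (hB : AnalyticOnNhd ℂ B (Metric.ball 0 ε)) (r q : ℝ) (hr : -1 < r) (hq : -1 < q) :
    AnalyticOnNhd ℂ
        (fun z => ∫ t in (0:ℝ)..1,
          (t:ℂ) ^ (r:ℂ) * ((1:ℂ) - (t:ℂ)) ^ (q:ℂ) * A (z * (t:ℂ)) * B (z * ((1:ℂ) - (t:ℂ))))
        (Metric.ball 0 ε) ∧
      ∀ z ∈ Metric.ball (0:ℂ) ε, z ∉ {w : ℂ | w.re ≤ 0 ∧ w.im = 0} →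
        z * ∫ t in (0:ℝ)..1,
            (z * (t:ℂ)) ^ (r:ℂ) * A (z * (t:ℂ))
              * (z * ((1:ℂ) - (t:ℂ))) ^ (q:ℂ) * B (z * ((1:ℂ) - (t:ℂ)))
          = z ^ ((r:ℂ) + (q:ℂ) + 1) * ∫ t in (0:ℝ)..1,
              (t:ℂ) ^ (r:ℂ) * ((1:ℂ) - (t:ℂ)) ^ (q:ℂ)
                * A (z * (t:ℂ)) * B (z * ((1:ℂ) - (t:ℂ))) :=
  conv_rpow_analytic_general ε A B hA hB r q hr hq
end
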